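/- Let S = {(x_i, y_i)}_{i=1}^n ⊆ ℝ × {−1,1} be a dataset with x_1 < x_2 < … < x_n, and suppose θ = (w, b, v) satisfies the KKT conditions of the maximum-margin problem for a width-k depth-2 ReLU network on S. Let 1 ≤ a < b ≤ n be such that x_b > x_a ≥ 0 and y_i = −1 for all a ≤ i ≤ b, and let ℐ'_{a,b} = {i : a ≤ i ≤ b, y_i N_θ(x_i) = 1} be enumerated as i_1 < … < i_m. Then there are at most 30 points in the interval [x_{i_1}, x_{i_m}] at which N_θ is not locally affine (i.e., at most 30 boundaries between linear regions in [x_{i_1}, x_{i_m}]). -/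

import Mathlib

open Finset

/-- The ReLU activation function. -/
noncomputable def relu (z : ℝ) : ℝ := max 0 z

/-- A width-`k` depth-2 ReLU network with weights `w`, biases `b`, output weights `v`. -/
noncomputable def NNet {k : ℕ} (w b v : Fin k → ℝ) (x : ℝ) : ℝ :=
  ∑ j : Fin k, v j * relu (w j * x + b j)

/-- `θ = (w, b, v)` satisfies the KKT conditions of the maximum-margin problem
for the dataset `(x i, y i)`. -/
def IsKKT {n k : ℕ} (x y : Fin n → ℝ) (w b v : Fin k → ℝ) : Prop :=
  (∀ i, 1 ≤ y i * NNet w b v (x i)) ∧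
  ∃ (lam : Fin n → ℝ) (sg : Fin n → Fin k → ℝ),
    (∀ i, 0 ≤ lam i) ∧
    (∀ i j, sg i j ∈ Set.Icc (0 : ℝ) 1) ∧
    (∀ i j, 0 < w j * x i + b j → sg i j = 1) ∧
    (∀ i j, w j * x i + b j < 0 → sg i j = 0) ∧
    (∀ i, y i * NNet w b v (x i) ≠ 1 → lam i = 0) ∧
    (∀ j, v j ≠ 0 → w j = ∑ i, lam i * y i * v j * sg i j * x i) ∧
    (∀ j, v j ≠ 0 → b j = ∑ i, lam i * y i * v j * sg i j)

/-- `f` is locally affine at `x`: it agrees with an affine function on a neighborhood of `x`. -/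
def LocallyAffineAt (f : ℝ → ℝ) (x : ℝ) : Prop :=
  ∃ c d : ℝ, ∀ᶠ z in nhds x, f z = c * z + d

/-- `x` is an activation point of the network `(w, b, v)`. -/
def IsActivationPoint {k : ℕ} (w b v : Fin k → ℝ) (x : ℝ) : Prop :=
  ∃ j : Fin k, v j ≠ 0 ∧ w j ≠ 0 ∧ w j * x + b j = 0

/-- The derivative of `f` decreases at `x`: for all sufficiently small `ε > 0`,
the derivative at `x + ε` is smaller than the derivative at `x - ε`. -/
def DerivDecreasesAt (f : ℝ → ℝ) (x : ℝ) : Prop :=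
  ∃ ε₀ > (0 : ℝ), ∀ ε : ℝ, 0 < ε → ε < ε₀ → deriv f (x + ε) < deriv f (x - ε)

/-- The derivative of `f` increases at `x`: for all sufficiently small `ε > 0`,
the derivative at `x - ε` is smaller than the derivative at `x + ε`. -/
def DerivIncreasesAt (f : ℝ → ℝ) (x : ℝ) : Prop :=
  ∃ ε₀ > (0 : ℝ), ∀ ε : ℝ, 0 < ε → ε < ε₀ → deriv f (x - ε) < deriv f (x + ε)


/-!
On the window `[x_{i_1}, x_{i_m}]` every label is `-1`, so the network equals `-1` at every
margin point. Stationarity writes each neuron's preactivation as a combination of the support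
vectors, all of which are margin points. Consequently two kinks of neurons whose input weights
have the same sign cannot lie in one gap between consecutive margin points, so each cell
`(x_{i_t}, x_{i_{t+1}}]` contains at most three points where the network is not locally affine.
Moreover, comparing two nested neurons at the kink of the inner one shows that among kinks with
`v_j > 0` in the window at most one has `w_j > 0` and at most one has `w_j < 0`. Away from these
two kinks the network is concave, and a concave function equal to `-1` at three points is
constant between the outer two. Hence only the two boundary cells and the three cells around each
positive kink contain non-affine points: at most `1 + (2 + 3 * 2) * 3 = 25` of them.
-/

open Set

/-- `s` is an admissible value of `σ'(p)`, the derivative of `relu` at `p`. -/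
def IsReluSubgrad (p s : ℝ) : Prop :=
  s ∈ Icc (0 : ℝ) 1 ∧ (0 < p → s = 1) ∧ (p < 0 → s = 0)

namespace IsReluSubgrad

variable {p q s t : ℝ}

theorem eq_of_mul_pos (hs : IsReluSubgrad p s) (ht : IsReluSubgrad q t) (h : 0 < p * q) :
    s = t := by
  rcases pos_and_pos_or_neg_and_neg_of_mul_pos h with ⟨hp, hq⟩ | ⟨hp, hq⟩
  · rw [hs.2.1 hp, ht.2.1 hq]
  · rw [hs.2.2 hp, ht.2.2 hq]

theorem le (hs : IsReluSubgrad p s) (ht : IsReluSubgrad q t) (h : p < 0 ∨ 0 < q) : s ≤ t := by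
  rcases h with hp | hq
  · rw [hs.2.2 hp]
    exact ht.1.1
  · rw [ht.2.1 hq]
    exact hs.1.2

end IsReluSubgrad

theorem LocallyAffineAt.add {f g : ℝ → ℝ} {z : ℝ} (hf : LocallyAffineAt f z)
    (hg : LocallyAffineAt g z) : LocallyAffineAt (f + g) z := by
  obtain ⟨c, d, hcd⟩ := hf
  obtain ⟨c', d', hcd'⟩ := hg
  refine ⟨c + c', d + d', ?_⟩
  filter_upwards [hcd, hcd'] with u hu hu'
  rw [Pi.add_apply, hu, hu']
  ring

theorem locallyAffineAt_mul_relu {v w b z : ℝ} (h : v ≠ 0 → w ≠ 0 → w * z + b ≠ 0) :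
    LocallyAffineAt (fun u => v * relu (w * u + b)) z := by
  by_cases hv : v = 0
  · exact ⟨0, 0, .of_forall fun u => by simp [hv]⟩
  by_cases hw : w = 0
  · exact ⟨0, v * relu b, .of_forall fun u => by simp [hw]⟩
  have hcont : Continuous fun u : ℝ => w * u + b := by fun_prop
  rcases (h hv hw).lt_or_gt with hneg | hpos
  · refine ⟨0, 0, ?_⟩
    filter_upwards [(hcont.tendsto z).eventually_lt_const hneg] with u hu
    simp [relu, max_eq_left hu.le]
  · refine ⟨v * w, v * b, ?_⟩
    filter_upwards [(hcont.tendsto z).eventually_const_lt hpos] with u hu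
    rw [relu, max_eq_right hu.le]
    ring

theorem convexOn_relu_affine {S : Set ℝ} (hS : Convex ℝ S) (w b : ℝ) :
    ConvexOn ℝ S fun u => relu (w * u + b) :=
  (convexOn_const 0 hS).sup (((LinearMap.mulLeft ℝ w).convexOn hS).add_const b)

theorem nonneg_or_nonpos_on_Icc {w b p r : ℝ}
    (h : w ≠ 0 → ∀ z ∈ Ioo p r, w * z + b ≠ 0) :
    (∀ u ∈ Icc p r, 0 ≤ w * u + b) ∨ ∀ u ∈ Icc p r, w * u + b ≤ 0 := by
  by_contra! hcon
  obtain ⟨⟨u, hu, hneg⟩, u', hu', hpos⟩ := hcon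
  have hw : w ≠ 0 := by
    rintro rfl
    linarith
  obtain ⟨z, hz⟩ : ∃ z, w * z + b = 0 := ⟨-b / w, by field_simp; ring⟩
  refine h hw z ⟨?_, ?_⟩ hz <;> rcases hw.lt_or_gt with hw | hw <;>
    nlinarith [hu.1, hu.2, hu'.1, hu'.2]

theorem concaveOn_mul_relu_of_nonpos {S : Set ℝ} (hS : Convex ℝ S) {v : ℝ} (hv : v ≤ 0)
    (w b : ℝ) : ConcaveOn ℝ S fun u => v * relu (w * u + b) :=
  ((convexOn_relu_affine hS w b).neg.smul (neg_nonneg.2 hv)).congr fun u _ => by simp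

theorem concaveOn_mul_relu_of_nonneg {p r v w b : ℝ} (hv : 0 ≤ v)
    (h : w ≠ 0 → ∀ z ∈ Ioo p r, w * z + b ≠ 0) :
    ConcaveOn ℝ (Icc p r) fun u => v * relu (w * u + b) := by
  refine ConcaveOn.smul hv ?_
  rcases nonneg_or_nonpos_on_Icc h with hpos | hneg
  · exact (((LinearMap.mulLeft ℝ w).concaveOn (convex_Icc p r)).add_const b).congr
      fun u hu => (max_eq_right (hpos u hu)).symm
  · exact (concaveOn_const 0 (convex_Icc p r)).congr fun u hu => (max_eq_left (hneg u hu)).symm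

theorem ConcaveOn.eqOn_Icc_of_eq {f : ℝ → ℝ} {p q r d : ℝ} (hf : ConcaveOn ℝ (Icc p r) f)
    (hpq : p < q) (hqr : q < r) (hp : f p = d) (hq : f q = d) (hr : f r = d) :
    EqOn f (fun _ => d) (Icc p r) := by
  intro u hu
  have hpI : p ∈ Icc p r := left_mem_Icc.2 (hpq.trans hqr).le
  have hrI : r ∈ Icc p r := right_mem_Icc.2 (hpq.trans hqr).le
  refine le_antisymm ?_ ?_
  · by_contra! hlt
    rcases lt_trichotomy u q with huq | rfl | hqu
    · have := hf.lt_right_of_left_lt hu hrI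
        (by rw [openSegment_eq_Ioo (huq.trans hqr)]; exact ⟨huq, hqr⟩) (hq ▸ hlt)
      linarith
    · exact hlt.ne' hq
    · have := hf.left_lt_of_lt_right hpI hu
        (by rw [openSegment_eq_Ioo (hpq.trans hqu)]; exact ⟨hpq, hqu⟩) (hq ▸ hlt)
      linarith
  · have := hf.ge_on_segment (z := u) hpI hrI (by rwa [segment_eq_Icc (hpq.trans hqr).le])
    rwa [hp, hr, min_self] at this

section Network

variable {k : ℕ} {w b v : Fin k → ℝ}

theorem NNet_eq_sum (w b v : Fin k → ℝ) :
    NNet w b v = ∑ j, fun u => v j * relu (w j * u + b j) := by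
  ext u
  simp [NNet]

theorem locallyAffineAt_nnet {z : ℝ} (hz : ¬ IsActivationPoint w b v z) :
    LocallyAffineAt (NNet w b v) z := by
  rw [NNet_eq_sum]
  exact Finset.sum_induction _ (LocallyAffineAt · z) (fun _ _ => LocallyAffineAt.add)
    ⟨0, 0, .of_forall fun u => by simp⟩
    fun j _ => locallyAffineAt_mul_relu fun hv hw hzj => hz ⟨j, hv, hw, hzj⟩

theorem concaveOn_nnet {p r : ℝ}
    (h : ∀ j, 0 < v j → w j ≠ 0 → ∀ z ∈ Ioo p r, w j * z + b j ≠ 0) :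
    ConcaveOn ℝ (Icc p r) (NNet w b v) := by
  rw [NNet_eq_sum]
  refine Finset.sum_induction _ (ConcaveOn ℝ (Icc p r)) (fun _ _ => ConcaveOn.add)
    (concaveOn_const 0 (convex_Icc p r)) fun j _ => ?_
  rcases le_or_gt (v j) 0 with hv | hv
  · exact concaveOn_mul_relu_of_nonpos (convex_Icc p r) hv _ _
  · exact concaveOn_mul_relu_of_nonneg hv.le (h j hv)

theorem exists_pos_kink_of_not_locallyAffineAt {p q r d z : ℝ} (hpq : p < q) (hqr : q < r)
    (hp : NNet w b v p = d) (hq : NNet w b v q = d) (hr : NNet w b v r = d) (hz : z ∈ Ioo p r)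
    (hna : ¬ LocallyAffineAt (NNet w b v) z) :
    ∃ j, 0 < v j ∧ w j ≠ 0 ∧ ∃ s ∈ Ioo p r, w j * s + b j = 0 := by
  by_contra! h
  have hconst := (concaveOn_nnet h).eqOn_Icc_of_eq hpq hqr hp hq hr
  refine hna ⟨0, d, ?_⟩
  filter_upwards [isOpen_Ioo.mem_nhds hz] with u hu
  simpa using hconst (Ioo_subset_Icc_self hu)

end Network

section KKT

variable {n k : ℕ} {x y : Fin n → ℝ} {w b v : Fin k → ℝ}

theorem preact_eq_of_stationary {lam σ : Fin n → ℝ} {wj bj vj : ℝ}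
    (hw : wj = ∑ i, lam i * y i * vj * σ i * x i) (hb : bj = ∑ i, lam i * y i * vj * σ i)
    (ξ : ℝ) : wj * ξ + bj = vj * ∑ i, lam i * y i * σ i * (x i * ξ + 1) := by
  rw [hw, hb, Finset.sum_mul, Finset.mul_sum, ← Finset.sum_add_distrib]
  exact Finset.sum_congr rfl fun i _ => by ring

theorem preact_eq_of_kink {wj bj z : ℝ} (hz : wj * z + bj = 0) (u : ℝ) :
    wj * u + bj = wj * (u - z) := by
  linear_combination hz

theorem kink_identity {lam : Fin n → ℝ} {sg : Fin n → Fin k → ℝ}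
    (hw : ∀ j, v j ≠ 0 → w j = ∑ i, lam i * y i * v j * sg i j * x i)
    (hb : ∀ j, v j ≠ 0 → b j = ∑ i, lam i * y i * v j * sg i j)
    {j j' : Fin k} {z z' : ℝ} (hv : v j ≠ 0) (hv' : v j' ≠ 0)
    (hz : w j * z + b j = 0) (hz' : w j' * z' + b j' = 0) :
    w j * (z' - z) = v j * ∑ i, lam i * y i * (sg i j - sg i j') * (x i * z' + 1) := by
  have h := preact_eq_of_stationary (σ := fun i => sg i j) (hw j hv) (hb j hv) z'
  have h' := preact_eq_of_stationary (σ := fun i => sg i j') (hw j' hv') (hb j' hv') z'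
  rw [hz'] at h'
  have hsum' := (mul_eq_zero.1 h'.symm).resolve_left hv'
  calc w j * (z' - z) = w j * z' + b j := by linear_combination -hz
    _ = v j * (∑ i, lam i * y i * sg i j * (x i * z' + 1)
          - ∑ i, lam i * y i * sg i j' * (x i * z' + 1)) := by rw [h, hsum', sub_zero]
    _ = _ := by
      rw [← Finset.sum_sub_distrib]
      exact congrArg _ (Finset.sum_congr rfl fun i _ => by ring)

theorem IsKKT.exists_dual (hKKT : IsKKT x y w b v) :
    ∃ (lam : Fin n → ℝ) (sg : Fin n → Fin k → ℝ), (∀ i, 0 ≤ lam i) ∧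
      (∀ i j, IsReluSubgrad (w j * x i + b j) (sg i j)) ∧
      (∀ i, lam i ≠ 0 → y i * NNet w b v (x i) = 1) ∧
      ∀ j j' z z', v j ≠ 0 → v j' ≠ 0 → w j * z + b j = 0 → w j' * z' + b j' = 0 →
        w j * (z' - z) = v j * ∑ i, lam i * y i * (sg i j - sg i j') * (x i * z' + 1) := by
  obtain ⟨-, lam, sg, hlam, hsgI, hsg1, hsg0, hcs, hw, hb⟩ := hKKT
  exact ⟨lam, sg, hlam, fun i j => ⟨hsgI i j, hsg1 i j, hsg0 i j⟩,
    fun i hi => by_contra fun h => hi (hcs i h),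
    fun j j' z z' hv hv' hz hz' => kink_identity hw hb hv hv' hz hz'⟩

theorem IsKKT.kink_eq_of_no_margin (hKKT : IsKKT x y w b v) {p q z z' : ℝ} {j j' : Fin k}
    (hgap : ∀ i, x i ∈ Ioo p q → y i * NNet w b v (x i) ≠ 1)
    (hv : v j ≠ 0) (hv' : v j' ≠ 0) (hww : 0 < w j * w j')
    (hz : w j * z + b j = 0) (hz' : w j' * z' + b j' = 0)
    (hzI : z ∈ Ioo p q) (hz'I : z' ∈ Ioo p q) : z = z' := by
  obtain ⟨lam, sg, -, hsg, hcs, hid⟩ := hKKT.exists_dual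
  -- Support vectors lie outside `(p, q)`, where the two neurons have the same activation.
  have hsum : ∑ i, lam i * y i * (sg i j - sg i j') * (x i * z' + 1) = 0 := by
    refine Finset.sum_eq_zero fun i _ => ?_
    by_cases hi : lam i = 0
    · simp [hi]
    have hsep : 0 < (x i - z) * (x i - z') := by
      have hxi : x i ∉ Ioo p q := fun h => hgap i h (hcs i hi)
      rw [Set.mem_Ioo, not_and_or, not_lt, not_lt] at hxi
      rcases hxi with h | h <;> nlinarith [hzI.1, hzI.2, hz'I.1, hz'I.2]
    rw [(hsg i j).eq_of_mul_pos (hsg i j') (by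
      rw [preact_eq_of_kink hz, preact_eq_of_kink hz']; nlinarith [mul_pos hww hsep]),
      sub_self, mul_zero, zero_mul]
  have h := hid j j' z z' hv hv' hz hz'
  rw [hsum, mul_zero] at h
  linarith [sub_eq_zero.1 ((mul_eq_zero.1 h).resolve_left (left_ne_zero_of_mul hww.ne'))]

/-- `0 < w j * w j'` and `0 < w j * (z' - z)` say that the active half-line of `j` strictly
contains that of `j'`. -/
theorem IsKKT.neg_of_nested_kinks (hKKT : IsKKT x y w b v) {p q z z' : ℝ} {j j' : Fin k}
    (hp : 0 ≤ p) (hneg : ∀ i, x i ∈ Icc p q → y i = -1)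
    (hv : v j ≠ 0) (hv' : v j' ≠ 0) (hww : 0 < w j * w j')
    (hz : w j * z + b j = 0) (hz' : w j' * z' + b j' = 0)
    (hzI : z ∈ Icc p q) (hz'I : z' ∈ Icc p q) (hnest : 0 < w j * (z' - z)) : v j < 0 := by
  obtain ⟨lam, sg, hlam, hsg, -, hid⟩ := hKKT.exists_dual
  -- Only data between the kinks contribute, with label `-1` and `sg i j' ≤ sg i j`.
  have hsum : ∑ i, lam i * y i * (sg i j - sg i j') * (x i * z' + 1) ≤ 0 := by
    refine Finset.sum_nonpos fun i _ => ?_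
    rcases lt_or_ge 0 ((x i - z) * (x i - z')) with hsep | hbetween
    · rw [(hsg i j).eq_of_mul_pos (hsg i j') (by
        rw [preact_eq_of_kink hz, preact_eq_of_kink hz']; nlinarith [mul_pos hww hsep]),
        sub_self, mul_zero, zero_mul]
    have hxI : x i ∈ Icc p q := by
      constructor <;> by_contra! h <;> nlinarith [hzI.1, hzI.2, hz'I.1, hz'I.2]
    have hle : sg i j' ≤ sg i j := (hsg i j').le (hsg i j) (by
      rw [preact_eq_of_kink hz, preact_eq_of_kink hz']
      by_contra! h
      have hlt : w j * (x i - z') < 0 := by linarith [h.2, hnest]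
      have hsq : 0 < (x i - z') ^ 2 := sq_pos_of_ne_zero fun h0 => by simp [h0] at hlt
      nlinarith [mul_pos hww hsq, h.1])
    have hpos : 0 ≤ x i * z' + 1 := by nlinarith [hxI.1, hz'I.1]
    rw [hneg i hxI]
    nlinarith [mul_nonneg (mul_nonneg (hlam i) (sub_nonneg.2 hle)) hpos]
  by_contra! hv0
  nlinarith [hid j j' z z' hv hv' hz hz', mul_nonneg hv0 (neg_nonneg.2 hsum)]

theorem encard_kinks_le_two {I : Set ℝ} {Q : Fin k → Prop}
    (h : ∀ j j' z z', Q j → Q j' → 0 < w j * w j' → z ∈ I → z' ∈ I →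
      w j * z + b j = 0 → w j' * z' + b j' = 0 → z = z') :
    {z ∈ I | ∃ j, Q j ∧ w j ≠ 0 ∧ w j * z + b j = 0}.encard ≤ 2 := by
  have hsub : {z ∈ I | ∃ j, Q j ∧ w j ≠ 0 ∧ w j * z + b j = 0} ⊆
      {z ∈ I | ∃ j, Q j ∧ 0 < w j ∧ w j * z + b j = 0} ∪
        {z ∈ I | ∃ j, Q j ∧ w j < 0 ∧ w j * z + b j = 0} := by
    rintro z ⟨hz, j, hq, hw, hk⟩
    rcases hw.lt_or_gt with hw | hw
    exacts [Or.inr ⟨hz, j, hq, hw, hk⟩, Or.inl ⟨hz, j, hq, hw, hk⟩]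
  have hpos : {z ∈ I | ∃ j, Q j ∧ 0 < w j ∧ w j * z + b j = 0}.Subsingleton :=
    fun z ⟨hz, j, hq, hw, hk⟩ z' ⟨hz', j', hq', hw', hk'⟩ =>
      h j j' z z' hq hq' (mul_pos hw hw') hz hz' hk hk'
  have hneg : {z ∈ I | ∃ j, Q j ∧ w j < 0 ∧ w j * z + b j = 0}.Subsingleton :=
    fun z ⟨hz, j, hq, hw, hk⟩ z' ⟨hz', j', hq', hw', hk'⟩ =>
      h j j' z z' hq hq' (mul_pos_of_neg_of_neg hw hw') hz hz' hk hk'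
  calc _ ≤ _ := encard_mono hsub
    _ ≤ _ := encard_union_le _ _
    _ ≤ 1 + 1 := add_le_add (encard_le_one_iff_subsingleton.2 hpos)
        (encard_le_one_iff_subsingleton.2 hneg)
    _ = 2 := one_add_one_eq_two

theorem IsKKT.encard_activationPoints_le_two (hKKT : IsKKT x y w b v) {p q : ℝ}
    (hgap : ∀ i, x i ∈ Ioo p q → y i * NNet w b v (x i) ≠ 1) :
    {z ∈ Ioo p q | IsActivationPoint w b v z}.encard ≤ 2 :=
  encard_kinks_le_two fun _ _ _ _ hv hv' hww hz hz' hk hk' =>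
    hKKT.kink_eq_of_no_margin hgap hv hv' hww hk hk' hz hz'

theorem IsKKT.encard_pos_kinks_le_two (hKKT : IsKKT x y w b v) {p q : ℝ} (hp : 0 ≤ p)
    (hneg : ∀ i, x i ∈ Icc p q → y i = -1) :
    {z ∈ Icc p q | ∃ j, 0 < v j ∧ w j ≠ 0 ∧ w j * z + b j = 0}.encard ≤ 2 := by
  refine encard_kinks_le_two fun j j' z z' hv hv' hww hz hz' hk hk' => ?_
  by_contra hne
  have hsq : 0 < (z' - z) ^ 2 := sq_pos_of_ne_zero (sub_ne_zero.2 (Ne.symm hne))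
  rcases lt_or_ge 0 (w j * (z' - z)) with hnest | hnest
  · exact (hKKT.neg_of_nested_kinks hp hneg hv.ne' hv'.ne' hww hk hk' hz hz' hnest).not_gt hv
  · have hnest' : 0 < w j' * (z - z') := by nlinarith [mul_pos hww hsq]
    exact (hKKT.neg_of_nested_kinks hp hneg hv'.ne' hv.ne' (by rwa [mul_comm]) hk' hk hz' hz
      hnest').not_gt hv'

end KKT

theorem encard_le_of_cells {X : Type*} [LinearOrder X] {g : ℕ → X} (hg : Monotone g) {N : ℕ}
    {B : X → Prop} {P : Set X} (hP : P.Finite) {c : ℕ∞}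
    (hcell : ∀ t, {z ∈ Ioc (g t) (g (t + 1)) | B z}.encard ≤ c)
    (hloc : ∀ t, t + 3 ≤ N → ∀ z ∈ Ioc (g (t + 1)) (g (t + 2)), B z →
      (P ∩ Ioo (g t) (g (t + 3))).Nonempty) :
    {z ∈ Ioc (g 0) (g N) | B z}.encard ≤ (2 + 3 * P.encard) * c := by
  classical
  lift P to Finset X using hP
  have hcov : ∀ s, ∃ u, s ∈ Ioc (g 0) (g N) → u < N ∧ s ∈ Ioc (g u) (g (u + 1)) := by
    intro s
    by_cases hs : s ∈ Ioc (g 0) (g N)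
    · obtain ⟨u, hu, hsu⟩ := mem_iUnion₂.1 (Ioc_subset_biUnion_Ioc N g hs)
      exact ⟨u, fun _ => ⟨Finset.mem_range.1 hu, hsu⟩⟩
    · exact ⟨0, fun h => absurd h hs⟩
  choose u hu using hcov
  set T : Finset ℕ := {0, N - 1} ∪ P.biUnion fun s => {u s - 1, u s, u s + 1}
  have hT : T.card ≤ 2 + 3 * P.card := by
    refine (Finset.card_union_le _ _).trans (add_le_add Finset.card_le_two ?_)
    rw [mul_comm]
    exact Finset.card_biUnion_le_card_mul _ _ _ fun s _ => Finset.card_le_three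
  have hsub :
      {z ∈ Ioc (g 0) (g N) | B z} ⊆ ⋃ t ∈ T, {z ∈ Ioc (g t) (g (t + 1)) | B z} := by
    rintro z ⟨hz, hBz⟩
    obtain ⟨hzN, hzu⟩ := hu z hz
    refine mem_iUnion₂.2 ⟨u z, ?_, hzu, hBz⟩
    by_cases hend : u z = 0 ∨ u z = N - 1
    · simp only [T, Finset.mem_union, Finset.mem_insert, Finset.mem_singleton]
      tauto
    obtain ⟨s, hsP, hs⟩ := hloc (u z - 1) (by omega) z
      (by rw [show u z - 1 + 1 = u z by omega, show u z - 1 + 2 = u z + 1 by omega]; exact hzu)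
      hBz
    obtain ⟨-, hsu⟩ :=
      hu s ⟨(hg (Nat.zero_le _)).trans_lt hs.1, hs.2.le.trans (hg (by omega))⟩
    have h1 : u s < u z - 1 + 3 := hg.reflect_lt (hsu.1.trans hs.2)
    have h2 : u z - 1 < u s + 1 := hg.reflect_lt (hs.1.trans_le hsu.2)
    simp only [T, Finset.mem_union, Finset.mem_biUnion, Finset.mem_insert, Finset.mem_singleton]
    exact Or.inr ⟨s, hsP, by omega⟩
  calc _ ≤ ∑ t ∈ T, {z ∈ Ioc (g t) (g (t + 1)) | B z}.encard :=
        (encard_mono hsub).trans (Finset.set_encard_biUnion_le _ _)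
    _ ≤ T.card * c := by
        simpa using Finset.sum_le_card_nsmul T _ c fun t _ => hcell t
    _ ≤ _ := by
        rw [encard_coe_eq_coe_finsetCard]
        gcongr
        exact_mod_cast hT

section ClampSeq

variable {α : Type*} {m : ℕ} {f : Fin m → α}

def clampSeq (f : Fin m → α) (hm : 0 < m) (t : ℕ) : α :=
  f ⟨min t (m - 1), by omega⟩

theorem clampSeq_of_lt (hm : 0 < m) {t : ℕ} (ht : t < m) : clampSeq f hm t = f ⟨t, ht⟩ :=
  congrArg f (Fin.ext (min_eq_left (by omega)))

theorem monotone_clampSeq [Preorder α] (hf : Monotone f) (hm : 0 < m) : Monotone (clampSeq f hm) :=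
  fun _ _ h => hf (Fin.mk_le_mk.2 (min_le_min_right _ h))

theorem Monotone.clampSeq_le_last [Preorder α] (hf : Monotone f) (hm : 0 < m) (t : ℕ) :
    clampSeq f hm t ≤ f ⟨m - 1, by omega⟩ :=
  hf (Fin.mk_le_mk.2 (min_le_right _ _))

theorem StrictMono.clampSeq_lt [Preorder α] (hf : StrictMono f) (hm : 0 < m) {t : ℕ}
    (ht : t < m - 1) :
    clampSeq f hm t < clampSeq f hm (t + 1) := by
  rw [clampSeq_of_lt hm (by omega), clampSeq_of_lt hm (by omega)]
  exact hf (Fin.mk_lt_mk.2 (Nat.lt_succ_self t))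

end ClampSeq

theorem IsKKT.encard_not_locallyAffineAt_le {n k : ℕ} {x y : Fin n → ℝ}
    {w b v : Fin k → ℝ} (hKKT : IsKKT x y w b v) {g : ℕ → ℝ} (hg : Monotone g) {N : ℕ}
    (hstrict : ∀ t < N, g t < g (t + 1)) (hg0 : 0 ≤ g 0) (hNg : ∀ t, NNet w b v (g t) = -1)
    (hneg : ∀ i, x i ∈ Icc (g 0) (g N) → y i = -1)
    (hgap : ∀ t i, x i ∈ Ioo (g t) (g (t + 1)) → y i * NNet w b v (x i) ≠ 1) :
    {z ∈ Icc (g 0) (g N) | ¬ LocallyAffineAt (NNet w b v) z}.encard ≤ 25 := by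
  set K := {z ∈ Icc (g 0) (g N) | ∃ j, 0 < v j ∧ w j ≠ 0 ∧ w j * z + b j = 0}
  have hK : K.encard ≤ 2 := hKKT.encard_pos_kinks_le_two hg0 hneg
  have hcells := encard_le_of_cells hg (B := fun z => ¬ LocallyAffineAt (NNet w b v) z)
    (finite_of_encard_le_coe hK) (c := 3) (N := N) (fun t => ?cell) fun t ht z hz hna => ?loc
  case cell =>
    have hsub : {z ∈ Ioc (g t) (g (t + 1)) | ¬ LocallyAffineAt (NNet w b v) z} ⊆
        insert (g (t + 1)) {z ∈ Ioo (g t) (g (t + 1)) | IsActivationPoint w b v z} := by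
      rintro z ⟨hz, hna⟩
      rcases hz.2.eq_or_lt with rfl | hlt
      exacts [mem_insert _ _,
        Or.inr ⟨⟨hz.1, hlt⟩, by_contra fun h => hna (locallyAffineAt_nnet h)⟩]
    calc _ ≤ _ := encard_mono hsub
      _ ≤ _ := encard_insert_le _ _
      _ ≤ 2 + 1 := by gcongr; exact hKKT.encard_activationPoints_le_two (hgap t)
      _ = 3 := by norm_num
  case loc =>
    have h0 := hstrict t (by omega)
    have h1 := hstrict (t + 1) (by omega)
    have h2 := hstrict (t + 2) (by omega)
    obtain ⟨j, hv, hw, s, hs, hk⟩ := exists_pos_kink_of_not_locallyAffineAt h0 (h1.trans h2)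
      (hNg t) (hNg (t + 1)) (hNg (t + 3)) ⟨h0.trans hz.1, hz.2.trans_lt h2⟩ hna
    have hsW : s ∈ Icc (g 0) (g N) :=
      ⟨(hg (Nat.zero_le t)).trans hs.1.le, hs.2.le.trans (hg (by omega))⟩
    exact ⟨s, ⟨hsW, j, hv, hw, hk⟩, hs⟩
  have hsub : {z ∈ Icc (g 0) (g N) | ¬ LocallyAffineAt (NNet w b v) z} ⊆
      insert (g 0) {z ∈ Ioc (g 0) (g N) | ¬ LocallyAffineAt (NNet w b v) z} := by
    rintro z ⟨hz, hna⟩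
    rcases hz.1.eq_or_lt with rfl | hlt
    exacts [mem_insert _ _, Or.inr ⟨⟨hlt, hz.2⟩, hna⟩]
  calc _ ≤ _ := encard_mono hsub
    _ ≤ _ := encard_insert_le _ _
    _ ≤ (2 + 3 * 2) * 3 + 1 := by gcongr; exact hcells.trans (by gcongr)
    _ = 25 := by norm_num

theorem stmt9_general {n k : ℕ} (x y : Fin n → ℝ)
    (hx : StrictMono x)
    (w b v : Fin k → ℝ) (hKKT : IsKKT x y w b v)
    (a c : Fin n) (ha : 0 ≤ x a)
    (hyac : ∀ i, a ≤ i → i ≤ c → y i = -1)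
    (m : ℕ) (idx : Fin m → Fin n) (hmono : StrictMono idx)
    (hrange : ∀ i : Fin n,
      (a ≤ i ∧ i ≤ c ∧ y i * NNet w b v (x i) = 1) ↔ i ∈ Set.range idx)
    (hm : 0 < m) :
    {z ∈ Set.Icc (x (idx ⟨0, hm⟩)) (x (idx ⟨m - 1, Nat.sub_lt hm Nat.one_pos⟩)) |
      ¬ LocallyAffineAt (NNet w b v) z}.encard ≤ 30 := by
  have hf : StrictMono (x ∘ idx) := hx.comp hmono
  set g := clampSeq (x ∘ idx) hm
  have hg : Monotone g := monotone_clampSeq hf.monotone hm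
  have hg0 : g 0 = x (idx ⟨0, hm⟩) := clampSeq_of_lt hm hm
  have hgN : g (m - 1) = x (idx ⟨m - 1, Nat.sub_lt hm Nat.one_pos⟩) := clampSeq_of_lt hm _
  have hmem (t : Fin m) := (hrange (idx t)).2 ⟨t, rfl⟩
  have hwin (i : Fin n) (hi : x i ∈ Icc (g 0) (g (m - 1))) : a ≤ i ∧ i ≤ c := by
    rw [hg0, hgN] at hi
    exact ⟨hx.le_iff_le.1 ((hx.monotone (hmem _).1).trans hi.1),
      hx.le_iff_le.1 (hi.2.trans (hx.monotone (hmem _).2.1))⟩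
  have hNg (t : ℕ) : NNet w b v (g t) = -1 := by
    obtain ⟨ha', hc', hmargin⟩ := hmem ⟨min t (m - 1), by omega⟩
    rw [hyac _ ha' hc'] at hmargin
    change NNet w b v (x (idx _)) = -1
    linarith
  have hgap (t : ℕ) (i : Fin n) (hi : x i ∈ Ioo (g t) (g (t + 1))) :
      y i * NNet w b v (x i) ≠ 1 := by
    intro hmargin
    have hiW : x i ∈ Icc (g 0) (g (m - 1)) :=
      ⟨(hg (Nat.zero_le t)).trans hi.1.le,
        hi.2.le.trans (hgN ▸ hf.monotone.clampSeq_le_last hm _)⟩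
    obtain ⟨s, rfl⟩ := (hrange i).1 ⟨(hwin i hiW).1, (hwin i hiW).2, hmargin⟩
    exact hg.ne_of_lt_of_lt_nat t hi.1 hi.2 s (clampSeq_of_lt hm s.2)
  have key := hKKT.encard_not_locallyAffineAt_le hg (fun t ht => hf.clampSeq_lt hm ht)
    (ha.trans (hx.monotone (hmem _).1)) hNg (fun i hi => hyac i (hwin i hi).1 (hwin i hi).2) hgap
  rw [hg0, hgN] at key
  exact key.trans (by norm_num)

/-- With `y_i = -1` on `[a, c]` and `ℐ'_{a,c} = {i : a ≤ i ≤ c, y_i N_θ(x_i) = 1}`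
enumerated by the strictly monotone `idx : Fin m → Fin n` (with `m > 0`), there are at most `30`
points in `[x_{i_1}, x_{i_m}]` at which `N_θ` is not locally affine. -/
theorem stmt9 {n k : ℕ} (x y : Fin n → ℝ)
    (hx : StrictMono x) (hy : ∀ i, y i = 1 ∨ y i = -1)
    (w b v : Fin k → ℝ) (hKKT : IsKKT x y w b v)
    (a c : Fin n) (hac : a < c) (ha : 0 ≤ x a) (hxac : x a < x c)
    (hyac : ∀ i, a ≤ i → i ≤ c → y i = -1)
    (m : ℕ) (idx : Fin m → Fin n) (hmono : StrictMono idx)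
    (hrange : ∀ i : Fin n,
      (a ≤ i ∧ i ≤ c ∧ y i * NNet w b v (x i) = 1) ↔ i ∈ Set.range idx)
    (hm : 0 < m) :
    {z ∈ Set.Icc (x (idx ⟨0, hm⟩)) (x (idx ⟨m - 1, Nat.sub_lt hm Nat.one_pos⟩)) |
      ¬ LocallyAffineAt (NNet w b v) z}.encard ≤ 30 :=
  stmt9_general x y hx w b v hKKT a c ha hyac m idx hmono hrange hm
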